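/- The Dirichlet inverse of κ_x equals J_x^{-1} * (2μ − ε), where J_x^{-1} is the Dirichlet inverse of Jordan's totient J_x. -/

import Mathlib

open Finset

/-- Recursive divisor function: κ_x(n) = n^x + Σ_{d|n, d<n} κ_x(d). -/
noncomputable def kappa (x : ℂ) (n : ℕ) : ℂ :=
  (n : ℂ) ^ x + ∑ d ∈ n.properDivisors.attach, kappa x d.1
termination_by n
decreasing_by exact (Nat.mem_properDivisors.mp d.2).2

/-- Number of ordered factorizations: K(n) = ε(n) + Σ_{d|n, d<n} K(d). -/
def Kfac (n : ℕ) : ℕ :=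
  (if n = 1 then 1 else 0) + ∑ d ∈ n.properDivisors.attach, Kfac d.1
termination_by n
decreasing_by exact (Nat.mem_properDivisors.mp d.2).2

/-- Divisor power sum σ_x(n) = Σ_{d|n} d^x. -/
noncomputable def sigmaC (x : ℂ) (n : ℕ) : ℂ := ∑ d ∈ n.divisors, (d : ℂ) ^ x

/-- Jordan's totient J_x = μ * id_x. -/
noncomputable def jordan (x : ℂ) (n : ℕ) : ℂ :=
  ∑ d ∈ n.divisors, (ArithmeticFunction.moebius d : ℂ) * ((n / d : ℕ) : ℂ) ^ x

/-! The defining recursion says `κ_x * ζ = 2 κ_x - id_x`, i.e. `κ_x * (2ε - ζ) = id_x`.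
Convolving with `μ` and using `ζ * μ = ε`, `id_x * μ = J_x` gives `κ_x * (2μ - ε) = J_x`, so
`κ_x⁻¹ = J_x⁻¹ * (2μ - ε)`. -/

open ArithmeticFunction
open scoped ArithmeticFunction.Moebius ArithmeticFunction.zeta

section Convolution

variable {R : Type*} [Semiring R]

theorem toArithmeticFunction_mul_apply (f g : ℕ → R) (n : ℕ) :
    (toArithmeticFunction f * toArithmeticFunction g) n = ∑ d ∈ n.divisors, f d * g (n / d) := by
  rw [← Nat.sum_divisorsAntidiagonal fun a b => f a * g b]
  exact congrFun (LSeries.convolution_def f g) n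

theorem toArithmeticFunction_mul_eq_one {f g : ℕ → R}
    (h : ∀ n : ℕ, 0 < n → ∑ d ∈ n.divisors, f d * g (n / d) = if n = 1 then 1 else 0) :
    toArithmeticFunction f * toArithmeticFunction g = 1 := by
  ext n
  rcases Nat.eq_zero_or_pos n with rfl | hn
  · simp
  · rw [toArithmeticFunction_mul_apply, h n hn, one_apply]

end Convolution

theorem toArithmeticFunction_two_moebius_sub_one {R : Type*} [Ring R] :
    toArithmeticFunction (fun n => 2 * (μ n : R) - if n = 1 then 1 else 0) =
      2 * (μ : ArithmeticFunction R) - 1 := by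
  ext n
  rcases eq_or_ne n 0 with rfl | hn
  · simp
  · simp [toArithmeticFunction, hn, two_mul, sub_eq_add_neg, one_apply]

noncomputable def idPow (x : ℂ) : ArithmeticFunction ℂ :=
  toArithmeticFunction fun n : ℕ => (n : ℂ) ^ x

theorem kappa_eq (x : ℂ) (n : ℕ) :
    kappa x n = (n : ℂ) ^ x + ∑ d ∈ n.properDivisors, kappa x d := by
  rw [kappa, Finset.sum_attach]

theorem sum_divisors_kappa_add_cpow (x : ℂ) {n : ℕ} (hn : n ≠ 0) :
    ∑ d ∈ n.divisors, kappa x d + (n : ℂ) ^ x = 2 * kappa x n := by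
  rw [← Nat.cons_self_properDivisors hn, Finset.sum_cons, kappa_eq x n]
  ring

theorem toArithmeticFunction_kappa_mul_zeta_add_idPow (x : ℂ) :
    toArithmeticFunction (kappa x) * ζ + idPow x = 2 * toArithmeticFunction (kappa x) := by
  ext n
  rcases eq_or_ne n 0 with rfl | hn
  · simp
  rw [ArithmeticFunction.add_apply, coe_mul_zeta_apply, two_mul, ArithmeticFunction.add_apply]
  simp only [idPow, toArithmeticFunction, coe_mk, if_neg hn]
  rw [Finset.sum_congr rfl fun d hd => if_neg (Nat.ne_of_gt (Nat.pos_of_mem_divisors hd)),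
    sum_divisors_kappa_add_cpow x hn, two_mul]

theorem idPow_mul_moebius (x : ℂ) : idPow x * μ = toArithmeticFunction (jordan x) := by
  have hμ : (μ : ArithmeticFunction ℂ) = toArithmeticFunction fun n => (μ n : ℂ) := by
    ext n
    rcases eq_or_ne n 0 with rfl | hn <;> simp [toArithmeticFunction, *]
  ext n
  rw [mul_comm, hμ, idPow, toArithmeticFunction_mul_apply]
  rcases eq_or_ne n 0 with rfl | hn
  · simp
  · simp [toArithmeticFunction, hn, jordan]

theorem toArithmeticFunction_kappa_mul_two_moebius_sub_one (x : ℂ) :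
    toArithmeticFunction (kappa x) * (2 * μ - 1) = toArithmeticFunction (jordan x) := by
  linear_combination (-(μ : ArithmeticFunction ℂ)) * toArithmeticFunction_kappa_mul_zeta_add_idPow x
    + idPow_mul_moebius x + toArithmeticFunction (kappa x) * coe_zeta_mul_coe_moebius (R := ℂ)

theorem stmt12 (x : ℂ) (g h : ℕ → ℂ)
    (hg : ∀ n : ℕ, 0 < n →
      ∑ d ∈ n.divisors, kappa x d * g (n / d) = (if n = 1 then 1 else 0))
    (hh : ∀ n : ℕ, 0 < n →
      ∑ d ∈ n.divisors, jordan x d * h (n / d) = (if n = 1 then 1 else 0)) :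
    ∀ n : ℕ, 0 < n →
      g n = ∑ d ∈ n.divisors, h d *
        (2 * (ArithmeticFunction.moebius (n / d) : ℂ) - (if n / d = 1 then 1 else 0)) := by
  intro n hn
  have hKM := toArithmeticFunction_kappa_mul_two_moebius_sub_one x
  rw [← toArithmeticFunction_two_moebius_sub_one] at hKM
  set K := toArithmeticFunction (kappa x)
  set G := toArithmeticFunction g
  set H := toArithmeticFunction h
  set M := toArithmeticFunction fun m => 2 * (μ m : ℂ) - if m = 1 then 1 else 0
  have hKG : K * G = 1 := toArithmeticFunction_mul_eq_one hg
  have hJH : toArithmeticFunction (jordan x) * H = 1 := toArithmeticFunction_mul_eq_one hh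
  -- `G = G * (J * H) = G * (K * M) * H = (K * G) * (H * M)`
  have hG : G = H * M := by linear_combination (-G) * hJH - G * H * hKM + H * M * hKG
  calc g n = G n := by simp [G, toArithmeticFunction, hn.ne']
    _ = (H * M) n := by rw [hG]
    _ = _ := toArithmeticFunction_mul_apply _ _ n
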